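/- Cast substitution: if Γ; 𝔼 ⊢ A ↪ B : c₁ and Γ; 𝔼, ι : A ↪ B ⊢ C ↪ D : c₂, then Γ; 𝔼 ⊢ C ↪ D : c₂[ι ↦ c₁], where c₂[ι ↦ c₁] substitutes c₁ for the free cast variable ι in c₂. -/
import Mathlib


/-- Types: Int, Top, arrow, de Bruijn type variables, and recursive types μ. -/
inductive Ty : Type
| int : Ty
| top : Ty
| arrow : Ty → Ty → Ty
| var : Nat → Ty
| mu : Ty → Ty
deriving DecidableEq

/-- Shifting of de Bruijn type variables. -/
def tshift (d c : Nat) : Ty → Ty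
| .int => .int
| .top => .top
| .arrow A B => .arrow (tshift d c A) (tshift d c B)
| .var n => if n < c then .var n else .var (n + d)
| .mu A => .mu (tshift d (c+1) A)

/-- Capture-avoiding substitution of type S for variable k. -/
def tsubst (k : Nat) (S : Ty) : Ty → Ty
| .int => .int
| .top => .top
| .arrow A B => .arrow (tsubst k S A) (tsubst k S B)
| .var n => if n = k then S else if k < n then .var (n-1) else .var n
| .mu A => .mu (tsubst (k+1) (tshift 1 0 S) A)

/-- Well-formedness: all free type variables are below n. -/
def Ty.wf : Nat → Ty → Prop
| _, .int => True
| _, .top => True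
| n, .arrow A B => A.wf n ∧ B.wf n
| n, .var i => i < n
| n, .mu A => A.wf (n+1)

/-- Brandt–Henglein inductive equi-recursive type equality H ⊢ A ≐ B. -/
inductive TyEq : List (Ty × Ty) → Ty → Ty → Prop
| assump : (A, B) ∈ H → TyEq H A B
| refl : TyEq H A A
| trans : TyEq H A B → TyEq H B C → TyEq H A C
| symm : TyEq H A B → TyEq H B A
| unfold : TyEq H (.mu A) (tsubst 0 (.mu A) A)
| arrfix : TyEq ((Ty.arrow A1 A2, Ty.arrow B1 B2) :: H) A1 B1 →
           TyEq ((Ty.arrow A1 A2, Ty.arrow B1 B2) :: H) A2 B2 →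
           TyEq H (.arrow A1 A2) (.arrow B1 B2)

/-- Cast operators, with de Bruijn cast variables (bound by cfix). -/
inductive Cast : Type
| cvar : Nat → Cast
| id : Cast
| fold : Ty → Cast
| unfold : Ty → Cast
| arrow : Cast → Cast → Cast
| seq : Cast → Cast → Cast
| cfix : Cast → Cast
deriving DecidableEq

/-- The dual (reverse) cast ¬c. -/
def Cast.dual : Cast → Cast
| .cvar i => .cvar i
| .id => .id
| .fold A => .unfold A
| .unfold A => .fold A
| .arrow c1 c2 => .arrow c1.dual c2.dual
| .seq c1 c2 => .seq c2.dual c1.dual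
| .cfix c => .cfix c.dual

/-- Shifting of cast variables. -/
def cshift (d c : Nat) : Cast → Cast
| .cvar n => if n < c then .cvar n else .cvar (n+d)
| .id => .id
| .fold A => .fold A
| .unfold A => .unfold A
| .arrow c1 c2 => .arrow (cshift d c c1) (cshift d c c2)
| .seq c1 c2 => .seq (cshift d c c1) (cshift d c c2)
| .cfix c1 => .cfix (cshift d (c+1) c1)

/-- Capture-avoiding substitution of a cast for cast variable k. -/
def csubst (k : Nat) (s : Cast) : Cast → Cast
| .cvar n => if n = k then s else if k < n then .cvar (n-1) else .cvar n
| .id => .id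
| .fold A => .fold A
| .unfold A => .unfold A
| .arrow c1 c2 => .arrow (csubst k s c1) (csubst k s c2)
| .seq c1 c2 => .seq (csubst k s c1) (csubst k s c2)
| .cfix c1 => .cfix (csubst (k+1) (cshift 1 0 s) c1)

/-- Type casting judgment 𝔼 ⊢ A ↪ B : c (cast context as de Bruijn list). -/
inductive TypCast : List (Ty × Ty) → Ty → Ty → Cast → Prop
| id : TypCast E A A .id
| arrow : TypCast E A1 B1 c1 → TypCast E A2 B2 c2 →
    TypCast E (.arrow A1 A2) (.arrow B1 B2) (.arrow c1 c2)
| unfold : TypCast E (.mu A) (tsubst 0 (.mu A) A) (.unfold (.mu A))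
| fold : TypCast E (tsubst 0 (.mu A) A) (.mu A) (.fold (.mu A))
| seq : TypCast E A B c1 → TypCast E B C c2 → TypCast E A C (.seq c1 c2)
| var : E[n]? = some (A, B) → TypCast E A B (.cvar n)
| fix : TypCast ((Ty.arrow A1 A2, Ty.arrow B1 B2) :: E)
           (.arrow A1 A2) (.arrow B1 B2) (.arrow c1 c2) →
        TypCast E (.arrow A1 A2) (.arrow B1 B2) (.cfix (.arrow c1 c2))

/-- Terms of λᵘFi (de Bruijn term variables). -/
inductive Tm : Type
| var : Nat → Tm
| lit : Int → Tm
| app : Tm → Tm → Tm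
| abs : Ty → Tm → Tm
| cast : Cast → Tm → Tm
deriving DecidableEq

def shiftTm (d c : Nat) : Tm → Tm
| .var n => if n < c then .var n else .var (n+d)
| .lit n => .lit n
| .app a b => .app (shiftTm d c a) (shiftTm d c b)
| .abs A e => .abs A (shiftTm d (c+1) e)
| .cast cc e => .cast cc (shiftTm d c e)

/-- Capture-avoiding term substitution. -/
def substTm (k : Nat) (s : Tm) : Tm → Tm
| .var n => if n = k then s else if k < n then .var (n-1) else .var n
| .lit n => .lit n
| .app a b => .app (substTm k s a) (substTm k s b)
| .abs A e => .abs A (substTm (k+1) (shiftTm 1 0 s) e)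
| .cast cc e => .cast cc (substTm k s e)

/-- Values of λᵘFi. -/
inductive Value : Tm → Prop
| lit : Value (.lit n)
| abs : Value (.abs A e)
| fold : Value v → Value (.cast (.fold A) v)
| arrow : Value v → Value (.cast (.arrow c1 c2) v)

/-- Call-by-value reduction of λᵘFi, including the cast push rules. -/
inductive Step : Tm → Tm → Prop
| beta : Value v → Step (.app (.abs A e) v) (substTm 0 v e)
| appl : Step e1 e1' → Step (.app e1 e2) (.app e1' e2)
| appr : Value v → Step e2 e2' → Step (.app v e2) (.app v e2')
| cast : Step e e' → Step (.cast c e) (.cast c e')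
| castId : Value v → Step (.cast .id v) v
| castArr : Value v1 → Value v2 →
    Step (.app (.cast (.arrow c1 c2) v1) v2)
         (.cast c2 (.app v1 (.cast c1.dual v2)))
| castSeq : Step (.cast (.seq c1 c2) e) (.cast c2 (.cast c1 e))
| castElim : Value v → Step (.cast (.unfold A) (.cast (.fold B) v)) v
| castFix : Step (.cast (.cfix c) e) (.cast (csubst 0 (.cfix c) c) e)

/-- Equi-recursive (cast-free) call-by-value reduction. -/
inductive EStep : Tm → Tm → Prop
| beta : Value v → EStep (.app (.abs A e) v) (substTm 0 v e)
| appl : EStep e1 e1' → EStep (.app e1 e2) (.app e1' e2)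
| appr : Value v → EStep e2 e2' → EStep (.app v e2) (.app v e2')

/-- Erasure of casts. -/
def erase : Tm → Tm
| .var n => .var n
| .lit n => .lit n
| .app a b => .app (erase a) (erase b)
| .abs A e => .abs A (erase e)
| .cast _ e => erase e

/-- Typing of λᵘFi. -/
inductive Typing : List Ty → Tm → Ty → Prop
| var : G[n]? = some A → Typing G (.var n) A
| lit : Typing G (.lit n) .int
| abs : Typing (A :: G) e B → Typing G (.abs A e) (.arrow A B)
| app : Typing G e1 (.arrow A B) → Typing G e2 A → Typing G (.app e1 e2) B
| cast : Typing G e A → TypCast [] A B c → Typing G (.cast c e) B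

/-- Equi-recursive typing with elaboration Γ ⊢ₑ e : A ▷ e'. -/
inductive ETyping : List Ty → Tm → Ty → Tm → Prop
| var : G[n]? = some A → ETyping G (.var n) A (.var n)
| lit : ETyping G (.lit n) .int (.lit n)
| abs : ETyping (A :: G) e B e' → ETyping G (.abs A e) (.arrow A B) (.abs A e')
| app : ETyping G e1 (.arrow A B) e1' → ETyping G e2 A e2' →
        ETyping G (.app e1 e2) B (.app e1' e2')
| eq : ETyping G e A e' → TypCast [] A B c → ETyping G e B (.cast c e')

/-- Iso-recursive Amber subtyping (de Bruijn presentation), n counts bound variable pairs. -/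
inductive AmberSub : Nat → Ty → Ty → Prop
| top : Ty.wf n A → AmberSub n A .top
| int : AmberSub n .int .int
| var : i < n → AmberSub n (.var i) (.var i)
| self : Ty.wf n (.mu A) → AmberSub n (.mu A) (.mu A)
| arrow : AmberSub n B1 A1 → AmberSub n A2 B2 → AmberSub n (.arrow A1 A2) (.arrow B1 B2)
| murec : AmberSub (n+1) A B → AmberSub n (.mu A) (.mu B)

/-- Typing of λᵘ<:Fi: λᵘFi typing plus subsumption. -/
inductive STyping : List Ty → Tm → Ty → Prop
| var : G[n]? = some A → STyping G (.var n) A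
| lit : STyping G (.lit n) .int
| abs : STyping (A :: G) e B → STyping G (.abs A e) (.arrow A B)
| app : STyping G e1 (.arrow A B) → STyping G e2 A → STyping G (.app e1 e2) B
| cast : STyping G e A → TypCast [] A B c → STyping G (.cast c e) B
| sub : STyping G e A → AmberSub 0 A B → STyping G e B

/-- Divergence under a reduction relation. -/
def Diverges (R : Tm → Tm → Prop) (e : Tm) : Prop :=
  ∀ e', Relation.ReflTransGen R e e' → ∃ e'', R e' e''


lemma cshift_cshift (a b k : Nat) : ∀ c : Cast,
    cshift a k (cshift b k c) = cshift (b + a) k c := by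
  intro c
  induction c generalizing k with
  | cvar n =>
      by_cases h : n < k
      · simp [cshift, h]
      · have h2 : ¬ (n + b < k) := by omega
        simp only [cshift, if_neg h, if_neg h2]
        congr 1; omega
  | id => simp [cshift]
  | fold A => simp [cshift]
  | unfold A => simp [cshift]
  | arrow c1 c2 ih1 ih2 => simp [cshift, ih1, ih2]
  | seq c1 c2 ih1 ih2 => simp [cshift, ih1, ih2]
  | cfix c ih => simp [cshift, ih]

lemma cshift_zero (k : Nat) : ∀ c : Cast, cshift 0 k c = c := by
  intro c
  induction c generalizing k with
  | cvar n => by_cases h : n < k <;> simp [cshift, h]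
  | id => simp [cshift]
  | fold A => simp [cshift]
  | unfold A => simp [cshift]
  | arrow c1 c2 ih1 ih2 => simp [cshift, ih1, ih2]
  | seq c1 c2 ih1 ih2 => simp [cshift, ih1, ih2]
  | cfix c ih => simp [cshift, ih]

lemma typcast_weaken (F : List (Ty × Ty)) {G : List (Ty × Ty)} {A B : Ty} {c : Cast}
    (h : TypCast G A B c) :
    ∀ E1 E2, G = E1 ++ E2 → TypCast (E1 ++ F ++ E2) A B (cshift F.length E1.length c) := by
  induction h with
  | id => intro E1 E2 _; exact TypCast.id
  | arrow h1 h2 ih1 ih2 =>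
      intro E1 E2 hG
      exact TypCast.arrow (ih1 E1 E2 hG) (ih2 E1 E2 hG)
  | unfold => intro E1 E2 _; exact TypCast.unfold
  | fold => intro E1 E2 _; exact TypCast.fold
  | seq h1 h2 ih1 ih2 =>
      intro E1 E2 hG
      exact TypCast.seq (ih1 E1 E2 hG) (ih2 E1 E2 hG)
  | @var E n A B hlook =>
      intro E1 E2 hG
      subst hG
      by_cases h : n < E1.length
      · simp only [cshift, if_pos h]
        apply TypCast.var
        rw [List.getElem?_append_left h] at hlook
        rw [List.append_assoc, List.getElem?_append_left h]
        exact hlook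
      · simp only [cshift, if_neg h]
        apply TypCast.var
        push_neg at h
        rw [List.getElem?_append_right h] at hlook
        have h2 : E1.length ≤ n + F.length := by omega
        rw [List.append_assoc, List.getElem?_append_right h2,
            List.getElem?_append_right (by omega : F.length ≤ n + F.length - E1.length)]
        have : n + F.length - E1.length - F.length = n - E1.length := by omega
        rw [this]
        exact hlook
  | fix h ih =>
      intro E1 E2 hG
      subst hG
      have := ih ((_, _) :: E1) E2 rfl
      simp only [cshift] at this ⊢
      exact TypCast.fix this

lemma cast_subst_gen {A B : Ty} {E : List (Ty × Ty)} {c1 : Cast}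
    (h1 : TypCast E A B c1) {G : List (Ty × Ty)} {C D : Ty} {c2 : Cast}
    (h2 : TypCast G C D c2) :
    ∀ E1, G = E1 ++ (A, B) :: E → TypCast (E1 ++ E) C D (csubst E1.length (cshift E1.length 0 c1) c2) := by
  induction h2 with
  | id => intro E1 _; exact TypCast.id
  | arrow ha hb iha ihb =>
      intro E1 hG; exact TypCast.arrow (iha E1 hG) (ihb E1 hG)
  | unfold => intro E1 _; exact TypCast.unfold
  | fold => intro E1 _; exact TypCast.fold
  | seq ha hb iha ihb =>
      intro E1 hG; exact TypCast.seq (iha E1 hG) (ihb E1 hG)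
  | @var G n C D hlook =>
      intro E1 hG
      subst hG
      rcases lt_trichotomy n E1.length with h | h | h
      · simp only [csubst, if_neg (by omega : ¬ n = E1.length), if_neg (by omega : ¬ E1.length < n)]
        apply TypCast.var
        rw [List.getElem?_append_left h] at hlook
        rw [List.getElem?_append_left h]
        exact hlook
      · subst h
        simp only [csubst, if_pos rfl]
        rw [List.getElem?_append_right (le_refl _)] at hlook
        simp at hlook
        obtain ⟨rfl, rfl⟩ := hlook
        have := typcast_weaken E1 h1 [] E rfl
        simpa using this
      · simp only [csubst, if_neg (by omega : ¬ n = E1.length), if_pos h]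
        apply TypCast.var
        rw [List.getElem?_append_right (by omega : E1.length ≤ n)] at hlook
        rw [List.getElem?_append_right (by omega : E1.length ≤ n - 1)]
        rw [List.getElem?_cons, if_neg (by omega : ¬ n - E1.length = 0)] at hlook
        have : n - 1 - E1.length = n - E1.length - 1 := by omega
        rw [this]
        exact hlook
  | fix h ih =>
      intro E1 hG
      subst hG
      have := ih ((_, _) :: E1) rfl
      simp only [csubst, List.length_cons] at this ⊢
      rw [cshift_cshift]
      exact TypCast.fix this

/-- Cast substitution lemma. -/
theorem cast_subst (E : List (Ty × Ty)) (A B C D : Ty) (c1 c2 : Cast)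
    (h1 : TypCast E A B c1)
    (h2 : TypCast ((A, B) :: E) C D c2) :
    TypCast E C D (csubst 0 c1 c2) := by
  have := cast_subst_gen h1 h2 [] rfl
  simpa [cshift_zero] using this
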